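/- arXiv:1411.2242 — 5 statements merged into one kernel-verified Lean document; each statement's English description precedes it below -/
import Mathlib

section
/- If a core-periphery partition (E,P) satisfies the dominance axiom I(E,P) ≥ c_d·I(P,P) and the robustness axiom I(E,E) ≥ c_r·I(P,E), then I(E,E) ≥ c_2·m where c_2 = (1 + 1/c_r + 1/(c_r·c_d))^{-1} and m = I(E,E) + I(E,P) + I(P,P) is the total number of edges. -/
/-- Dominance and robustness imply I(E,E) ≥ c₂·m with
c₂ = (1 + 1/c_r + 1/(c_r·c_d))⁻¹, where m = I(E,E)+I(E,P)+I(P,P). -/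
theorem stmt1 (IEE IEP IPE IPP m cd cr : ℝ)
    (hcd : 0 < cd) (hcr : 0 < cr)
    (hsym : IEP = IPE)
    (hm : m = IEE + IEP + IPP)
    (hdom : IEP ≥ cd * IPP)
    (hrob : IEE ≥ cr * IPE) :
    IEE ≥ (1 + 1/cr + 1/(cr*cd))⁻¹ * m := by
  have hK : (0:ℝ) < 1 + 1/cr + 1/(cr*cd) := by positivity
  rw [ge_iff_le, inv_mul_le_iff₀ hK]
  have h2 : IEP ≤ IEE / cr := (le_div_iff₀ hcr).2 (by rw [hsym]; linarith [mul_comm cr IPE])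
  have h3 : IPP ≤ IEE / (cr * cd) := by
    rw [le_div_iff₀ (by positivity)]
    calc IPP * (cr * cd) = (cd * IPP) * cr := by ring
    _ ≤ IEP * cr := by nlinarith
    _ ≤ IEE := by nlinarith [(le_div_iff₀ hcr).1 h2]
  have he : IEE * (1 + 1/cr + 1/(cr*cd)) = IEE + IEE/cr + IEE/(cr*cd) := by ring
  rw [mul_comm, he, hm]
  linarith
end

section
/- If a partition (E,P) satisfies the dominance axiom I(E,P) ≥ c_d·I(P,P) and the robustness axiom I(E,E) ≥ c_r·I(P,E), then |E| ≥ sqrt(c_2·m), where c_2 = (1+1/c_r+1/(c_r c_d))^{-1}. That is, the elite size is at least Ω(√m). -/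
/-- Under dominance and robustness, the elite size is at least √(c₂·m),
where c₂ = (1+1/c_r+1/(c_r·c_d))⁻¹, using I(E,E) ≤ |E|². -/
theorem stmt5 (IEE IEP IPE IPP m sizeE cd cr : ℝ)
    (hcd : 0 < cd) (hcr : 0 < cr)
    (hsym : IEP = IPE)
    (hm : m = IEE + IEP + IPP)
    (hdom : IEP ≥ cd * IPP)
    (hrob : IEE ≥ cr * IPE)
    (hsize : 0 ≤ sizeE)
    (hEE : IEE ≤ sizeE ^ 2) :
    sizeE ≥ Real.sqrt ((1 + 1/cr + 1/(cr*cd))⁻¹ * m) := by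
  have hc : 0 < 1 + 1/cr + 1/(cr*cd) := by positivity
  have hkey : (1 + 1/cr + 1/(cr*cd))⁻¹ * m ≤ sizeE ^ 2 := by
    rw [inv_mul_le_iff₀ hc]
    have h1 : IPE ≤ IEE / cr := by
      rw [le_div_iff₀ hcr]; linarith
    have h2 : IPP ≤ IEE / (cr * cd) := by
      rw [le_div_iff₀ (by positivity)]
      nlinarith
    have : m ≤ IEE * (1 + 1/cr + 1/(cr*cd)) := by
      have e1 : IEE / cr = IEE * (1/cr) := by ring
      have e2 : IEE / (cr*cd) = IEE * (1/(cr*cd)) := by ring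
      nlinarith
    nlinarith
  calc Real.sqrt ((1 + 1/cr + 1/(cr*cd))⁻¹ * m) ≤ Real.sqrt (sizeE ^ 2) :=
        Real.sqrt_le_sqrt hkey
    _ = sizeE := by rw [Real.sqrt_sq hsize]
end

section
/- If (E,P) satisfies dominance and robustness axioms and the elite has density δ_E (meaning I(E,E) = |E|^{δ_E}), then (c_2·m)^{1/δ_E} ≤ |E| ≤ m^{1/δ_E}, where c_2 = (1+1/c_r+1/(c_r c_d))^{-1}. In particular |E| = Θ(m^{1/δ_E}). -/
/-- If (E,P) satisfies dominance and robustness and the elite has density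
δ_E, i.e. I(E,E) = |E|^{δ_E}, then (c₂·m)^{1/δ_E} ≤ |E| ≤ m^{1/δ_E},
so |E| = Θ(m^{1/δ_E}). -/
theorem stmt6 (IEE IEP IPE IPP m sizeE cd cr δE : ℝ)
    (hcd : 0 < cd) (hcr : 0 < cr) (hδE : 0 < δE)
    (hsize : 0 < sizeE)
    (hsym : IEP = IPE)
    (hm : m = IEE + IEP + IPP)
    (hIEP0 : 0 ≤ IEP) (hIPP0 : 0 ≤ IPP)
    (hdom : IEP ≥ cd * IPP)
    (hrob : IEE ≥ cr * IPE)
    (hdens : IEE = sizeE ^ δE) :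
    ((1 + 1/cr + 1/(cr*cd))⁻¹ * m) ^ (1/δE) ≤ sizeE ∧
      sizeE ≤ m ^ (1/δE) := by
  have hIEE : 0 < IEE := hdens ▸ Real.rpow_pos_of_pos hsize δE
  have hc2 : 0 < 1 + 1/cr + 1/(cr*cd) := by positivity
  have key : ∀ x : ℝ, 0 ≤ x → x ≤ sizeE ^ δE → x ^ (1/δE) ≤ sizeE := by
    intro x hx hle
    calc x ^ (1/δE) ≤ (sizeE ^ δE) ^ (1/δE) :=
          Real.rpow_le_rpow hx hle (by positivity)
      _ = sizeE := by
          rw [← Real.rpow_mul hsize.le, mul_one_div, div_self hδE.ne', Real.rpow_one]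
  have hm0 : 0 ≤ m := by linarith
  constructor
  · apply key _ (by positivity)
    rw [← hdens]
    rw [inv_mul_le_iff₀ hc2]
    have h1 : IEP ≤ IEE / cr := by
      rw [le_div_iff₀ hcr, mul_comm]; linarith [hsym ▸ hrob]
    have h2 : IPP ≤ IEE / (cr * cd) := by
      rw [le_div_iff₀ (by positivity)]
      have : cd * IPP ≤ IEE / cr := le_trans hdom h1
      rw [le_div_iff₀ hcr] at this; nlinarith
    have e1 : IEE / cr = 1/cr * IEE := by ring
    have e2 : IEE / (cr*cd) = 1/(cr*cd) * IEE := by ring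
    rw [e1] at h1; rw [e2] at h2
    nlinarith [hIEE.le]
  · have hmle : sizeE ^ δE ≤ m := by rw [← hdens]; linarith
    have := Real.rpow_le_rpow (by positivity : (0:ℝ) ≤ sizeE ^ δE) hmle (by positivity : (0:ℝ) ≤ 1/δE)
    calc sizeE = (sizeE ^ δE) ^ (1/δE) := by
          rw [← Real.rpow_mul hsize.le, mul_one_div, div_self hδE.ne', Real.rpow_one]
      _ ≤ m ^ (1/δE) := this
end

section
/- Fix an integer b ≥ 1 and Z ≥ 1, and let ε = 4Z³−1. Consider the graph G_Z with elite E a clique on ε vertices (with self-loops) and periphery P consisting of 2bZ·ε isolated vertices (with self-loops), where every elite vertex has 2bZ³ edges to the periphery and every periphery vertex has Z² edges to the elite. Then I(E,E) = 2Z³(4Z³−1), I(E,P) = 2bZ³(4Z³−1), I(P,P) = 2bZ(4Z³−1), and the partition (E,P) satisfies dominance with c_d = 1 (I(E,P) ≥ I(P,P)) and robustness with c_r = 1/b (I(E,E) = I(E,P)/b). -/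
/-! With ε = 4Z³ − 1 the number ε + 1 = 2·(2Z³) is even, so the clique count ε(ε + 1)/2 is exactly
2Z³·ε; the other counts are plain products, and dominance amounts to Z² ≥ 1. -/

theorem Nat.mul_succ_div_two_of_succ_eq_two_mul {n m : ℕ} (h : n + 1 = 2 * m) :
    n * (n + 1) / 2 = m * n := by
  rw [h, mul_left_comm, Nat.mul_div_cancel_left _ two_pos, mul_comm]

theorem stmt15_general (b Z : ℕ) (hZ : 1 ≤ Z) :
    (4 * Z ^ 3 - 1) * ((4 * Z ^ 3 - 1) + 1) / 2 = 2 * Z ^ 3 * (4 * Z ^ 3 - 1) ∧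
    Z ^ 2 * (2 * b * Z * (4 * Z ^ 3 - 1)) = 2 * b * Z ^ 3 * (4 * Z ^ 3 - 1) ∧
    2 * b * Z * (4 * Z ^ 3 - 1) ≤ Z ^ 2 * (2 * b * Z * (4 * Z ^ 3 - 1)) ∧
    b * ((4 * Z ^ 3 - 1) * ((4 * Z ^ 3 - 1) + 1) / 2) =
      Z ^ 2 * (2 * b * Z * (4 * Z ^ 3 - 1)) := by
  have hε : 4 * Z ^ 3 - 1 + 1 = 2 * (2 * Z ^ 3) := by
    have := Nat.one_le_pow 3 Z hZ
    omega
  have hEE := Nat.mul_succ_div_two_of_succ_eq_two_mul hε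
  exact ⟨hEE, by ring, Nat.le_mul_of_pos_left _ (pow_pos hZ 2), by rw [hEE]; ring⟩

/-- In the purely elitistic graph G_Z (elite: clique on ε = 4Z³−1 vertices
with self-loops; periphery: 2bZ·ε isolated vertices with self-loops; every
elite vertex has 2bZ³ edges to the periphery and every periphery vertex has
Z² edges to the elite): I(E,E) = ε(ε+1)/2 = 2Z³(4Z³−1),
I(E,P) = Z²·|P| = 2bZ³(4Z³−1), I(P,P) = |P| = 2bZ(4Z³−1), and (E,P)
satisfies dominance with c_d = 1 and robustness with c_r = 1/b. -/
theorem stmt15 (b Z : ℕ) (hb : 1 ≤ b) (hZ : 1 ≤ Z) :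
    (4 * Z ^ 3 - 1) * ((4 * Z ^ 3 - 1) + 1) / 2 = 2 * Z ^ 3 * (4 * Z ^ 3 - 1) ∧
    Z ^ 2 * (2 * b * Z * (4 * Z ^ 3 - 1)) = 2 * b * Z ^ 3 * (4 * Z ^ 3 - 1) ∧
    2 * b * Z * (4 * Z ^ 3 - 1) ≤ Z ^ 2 * (2 * b * Z * (4 * Z ^ 3 - 1)) ∧
    b * ((4 * Z ^ 3 - 1) * ((4 * Z ^ 3 - 1) + 1) / 2) =
      Z ^ 2 * (2 * b * Z * (4 * Z ^ 3 - 1)) :=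
  stmt15_general b Z hZ
end

section
/- In the purely elitistic graph G_Z above, for every nonempty proper subset E' ⊊ E with |E∖E'| = χ (1 ≤ χ ≤ ε−1), the partition (E',V∖E') violates the robustness axiom with constant c_r = 1/b: b·(I(E,E) − χ(4Z³−1−χ) − χ(χ+1)/2) < I(E,P) + χ(4Z³−1−χ) − 2bZ³χ, i.e., b·I(E',E') < I(E',P'), where P' = V∖E'. Hence E is compact (minimal) for axioms (A1),(A2) with c_d = 1, c_r = 1/b. -/
/-- In the purely elitistic graph G_Z, every nonempty proper subset E' ⊊ E
(with |E∖E'| = χ, 1 ≤ χ ≤ ε−1) violates robustness with c_r = 1/b: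
b·I(E',E') < I(E',P'), i.e. (multiplying through by 2 to clear χ(χ+1)/2)
b·(2·I(E,E) − 2χ(ε−χ) − χ(χ+1)) < 2·(I(E,P) + χ(ε−χ) − 2bZ³χ), where
I(E,E) = 2Z³(4Z³−1), I(E,P) = 2bZ³(4Z³−1) and ε = 4Z³−1. Hence E is
compact for the axioms with c_d = 1, c_r = 1/b. -/
theorem stmt16 (b Z χ : ℤ) (hb : 1 ≤ b) (hZ : 1 ≤ Z)
    (hχ1 : 1 ≤ χ) (hχ2 : χ ≤ (4 * Z ^ 3 - 1) - 1) :
    b * (2 * (2 * Z ^ 3 * (4 * Z ^ 3 - 1)) -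
        2 * χ * ((4 * Z ^ 3 - 1) - χ) - χ * (χ + 1)) <
    2 * (2 * b * Z ^ 3 * (4 * Z ^ 3 - 1) +
        χ * ((4 * Z ^ 3 - 1) - χ) - 2 * b * Z ^ 3 * χ) := by
  nlinarith [mul_pos (show (0:ℤ) < χ by linarith)
      (show (0:ℤ) < (4 * Z ^ 3 - 1) - χ by linarith),
    mul_le_mul_of_nonneg_right hb
      (show (0:ℤ) ≤ χ * ((4 * Z ^ 3 - 1) - χ) by nlinarith),
    mul_pos (show (0:ℤ) < b by linarith)
      (mul_pos (show (0:ℤ) < χ by linarith)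
        (show (0:ℤ) < (4 * Z ^ 3 - 1) - χ by linarith))]
end
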